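/- Let A be a linearly ordered type, I : A → A → Prop a symmetric relation, and ≡ the Mazurkiewicz equivalence generated by swapping adjacent independent letters. A word w = [b₁, …, bₙ] is lexicographically minimal in its ≡-class if and only if there is no pair of indices i < j such that bⱼ < bᵢ and I bⱼ bₖ holds for every k with i ≤ k < j. (Anisimov–Knuth characterization of lexicographic normal forms of traces.) -/

import Mathlib

inductive MEquiv {A : Type*} (I : A → A → Prop) : List A → List A → Prop
  | refl (w : List A) : MEquiv I w w
  | symm {w w'} : MEquiv I w w' → MEquiv I w' w
  | trans {w w' w''} : MEquiv I w w' → MEquiv I w' w'' → MEquiv I w w''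
  | swap (u v : List A) (a b : A) : I a b →
      MEquiv I (u ++ [a, b] ++ v) (u ++ [b, a] ++ v)

/-!
If `bⱼ` is independent of every letter of the factor `bᵢ ⋯ bⱼ₋₁`, it can be bubbled in front of
`bᵢ`, giving an equivalent, lexicographically smaller word. Conversely, let `w' ≡ w` with `w' < w`,
first differing where `w` has `a` and `w'` has `b < a`. Equivalent words are permutations of each
other, so `b` occurs later in `w`. If some letter `x` between `a` and the first such `b` were
dependent on `b`, the projections of `w` and `w'` onto `{b, x}`, which are invariant under `≡`,
would differ there: one continues with `x`, the other with `b`.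
-/

open List

section

variable {A : Type*} {I : A → A → Prop}

namespace MEquiv

theorem perm {w w' : List A} (h : MEquiv I w w') : w ~ w' := by
  induction h with
  | refl => exact Perm.refl _
  | symm _ ih => exact ih.symm
  | trans _ _ ih₁ ih₂ => exact ih₁.trans ih₂
  | swap u v a b _ => exact ((Perm.swap b a []).append_left u).append_right v

theorem append_left (p : List A) {w w' : List A} (h : MEquiv I w w') :
    MEquiv I (p ++ w) (p ++ w') := by
  induction h with
  | refl => exact refl _
  | symm _ ih => exact symm ih
  | trans _ _ ih₁ ih₂ => exact trans ih₁ ih₂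
  | swap u v a b hab => simpa only [append_assoc] using swap (p ++ u) v a b hab

theorem middle {b : A} {u : List A} (hu : ∀ x ∈ u, I b x) (s : List A) :
    MEquiv I (u ++ b :: s) (b :: (u ++ s)) := by
  induction u with
  | nil => exact refl _
  | cons x u ih =>
    exact trans (append_left [x] (ih fun y hy => hu y (mem_cons_of_mem x hy)))
      (symm (swap [] (u ++ s) b x (hu x mem_cons_self)))

theorem filter_eq {q : A → Bool} (hq : ∀ a b, I a b → q a → q b → a = b) {w w' : List A}
    (h : MEquiv I w w') : w.filter q = w'.filter q := by
  induction h with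
  | refl => rfl
  | symm _ ih => exact ih.symm
  | trans _ _ ih₁ ih₂ => exact ih₁.trans ih₂
  | swap u v a b hab =>
    simp only [filter_append]
    congr 2
    by_cases hqab : q a ∧ q b
    · rw [hq a b hab hqab.1 hqab.2]
    · rcases not_and_or.1 hqab with hqa | hqb <;> simp [filter_cons, *]

end MEquiv

namespace List

variable {α : Type*}

theorem exists_eq_append_cons_of_lt [LT α] {l m : List α} (h : l < m)
    (hlen : l.length = m.length) : ∃ p a b u v, l = p ++ b :: v ∧ m = p ++ a :: u ∧ b < a := by
  induction h with
  | nil => simp at hlen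
  | @rel b v a u hba => exact ⟨[], a, b, u, v, rfl, rfl, hba⟩
  | @cons c l m _ ih =>
    obtain ⟨p, a, b, u, v, rfl, rfl, hba⟩ := ih (by simpa using hlen)
    exact ⟨c :: p, a, b, u, v, rfl, rfl, hba⟩

theorem mem_of_filter_append_eq_cons {q : α → Bool} {l₁ l₂ r : List α} {b x : α}
    (h : (l₁ ++ l₂).filter q = b :: r) (hx : x ∈ l₁) (hqx : q x) : b ∈ l₁ := by
  obtain ⟨y, t, hyt⟩ := exists_cons_of_ne_nil (ne_nil_of_mem (mem_filter.2 ⟨hx, hqx⟩))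
  rw [filter_append, hyt, cons_append, cons.injEq] at h
  exact h.1 ▸ mem_of_mem_filter (hyt ▸ mem_cons_self)

theorem getElem_append_append_of_le_of_lt {p m r : List α} {k : ℕ} (h₁ : p.length ≤ k)
    (h₂ : k < p.length + m.length) :
    (p ++ m ++ r)[k]'(by simp; omega) = m[k - p.length]'(by omega) := by
  rw [getElem_append_left (by simp; omega), getElem_append_right h₁]

end List

def HasForbiddenPattern [LT A] (I : A → A → Prop) (w : List A) : Prop :=
  ∃ p a u b s, w = p ++ a :: u ++ b :: s ∧ b < a ∧ ∀ x ∈ a :: u, I b x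

theorem HasForbiddenPattern.exists_mequiv_lt [LT A] {w : List A} (h : HasForbiddenPattern I w) :
    ∃ w', MEquiv I w w' ∧ w' < w := by
  obtain ⟨p, a, u, b, s, rfl, hba, hI⟩ := h
  refine ⟨p ++ b :: (a :: u ++ s), ?_, ?_⟩
  · simpa only [append_assoc] using (MEquiv.middle hI s).append_left p
  · simpa only [append_assoc, cons_append] using append_left_lt (cons_lt_cons_iff.2 (Or.inl hba))

theorem hasForbiddenPattern_of_mequiv_of_lt [LinearOrder A] (hsymm : ∀ a b, I a b → I b a)
    {w w' : List A} (h : MEquiv I w w') (hlt : w' < w) : HasForbiddenPattern I w := by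
  obtain ⟨p, a, b, t, v, rfl, rfl, hba⟩ :=
    exists_eq_append_cons_of_lt hlt h.perm.length_eq.symm
  have hbt : b ∈ t := by
    have := ((perm_append_left_iff p).1 h.perm).mem_iff.2 mem_cons_self
    exact (mem_cons.1 this).resolve_left hba.ne
  obtain ⟨u, s, hbu, rfl, -⟩ := exists_erase_eq hbt
  have hb : b ∉ a :: u := fun hb => (mem_cons.1 hb).elim hba.ne hbu
  refine ⟨p, a, u, b, s, by simp, hba, fun x hx => ?_⟩
  by_contra hbx
  set q : A → Bool := fun y => decide (y = b ∨ y = x)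
  have hq : ∀ c d, I c d → q c → q d → c = d := by
    simp only [q, decide_eq_true_eq]
    rintro c d hcd (rfl | rfl) (rfl | rfl)
    exacts [rfl, absurd hcd hbx, absurd (hsymm _ _ hcd) hbx, rfl]
  have hfilter : (a :: u ++ b :: s).filter q = b :: v.filter q := by
    rw [← filter_cons_of_pos (by simp [q])]
    have := h.filter_eq hq
    rw [filter_append, filter_append] at this
    exact append_cancel_left this
  exact hb (mem_of_filter_append_eq_cons hfilter hx (by simp [q]))

theorem hasForbiddenPattern_iff_exists_index [LT A] {w : List A} :
    HasForbiddenPattern I w ↔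
      ∃ (i j : ℕ) (hij : i < j) (hj : j < w.length),
        w[j] < w[i]'(hij.trans hj) ∧ ∀ k, i ≤ k → ∀ hk : k < j, I w[j] (w[k]'(hk.trans hj)) := by
  constructor
  · rintro ⟨p, a, u, b, s, rfl, hba, hI⟩
    have hb : (p ++ a :: u ++ b :: s)[p.length + (u.length + 1)]'(by simp) = b :=
      getElem_of_append rfl (by simp)
    refine ⟨p.length, p.length + (u.length + 1), by omega, by simp, ?_, fun k h₁ h₂ => ?_⟩
    · rw [hb, getElem_append_append_of_le_of_lt le_rfl (by simp)]
      simpa using hba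
    · rw [hb, getElem_append_append_of_le_of_lt h₁ (by simpa using h₂)]
      exact hI _ (getElem_mem _)
  · rintro ⟨i, j, hij, hj, hlt, hI⟩
    obtain ⟨u, hu⟩ : ∃ u, (w.drop i).take (j - i) = w[i] :: u :=
      ⟨_, by rw [drop_eq_getElem_cons, show j - i = j - i - 1 + 1 by omega, take_succ_cons]⟩
    have hdrop : w.drop j = (w.drop i).drop (j - i) := by
      rw [drop_drop, Nat.add_sub_cancel' hij.le]
    refine ⟨w.take i, w[i], u, w[j], w.drop (j + 1), ?_, hlt, ?_⟩
    · rw [← drop_eq_getElem_cons, ← hu, hdrop, append_assoc, take_append_drop, take_append_drop]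
    · rw [← hu, forall_mem_iff_getElem]
      intro t ht
      simp only [length_take, length_drop] at ht
      simpa using hI (i + t) (by omega) (by omega)

end

theorem anisimov_knuth {A : Type*} [LinearOrder A] (I : A → A → Prop)
    (hsymm : ∀ a b, I a b → I b a)
    (w : List A) :
    (∀ w', MEquiv I w w' → w ≤ w') ↔
      ¬ ∃ (i j : ℕ) (hij : i < j) (hj : j < w.length),
          w.get ⟨j, hj⟩ < w.get ⟨i, by omega⟩ ∧
          ∀ (k : ℕ) (hk₁ : i ≤ k) (hk₂ : k < j),
            I (w.get ⟨j, hj⟩) (w.get ⟨k, by omega⟩) := by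
  simp only [get_eq_getElem]
  rw [← hasForbiddenPattern_iff_exists_index]
  constructor
  · intro hmin hpattern
    obtain ⟨w', hw', hlt⟩ := hpattern.exists_mequiv_lt
    exact (hmin w' hw').not_gt hlt
  · intro hpattern w' hw'
    exact not_lt.1 fun hlt => hpattern (hasForbiddenPattern_of_mequiv_of_lt hsymm hw' hlt)
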